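/- Let (𝒫_j)_{j ∈ ℤ} be a partition of a finite set M such that: (a) #𝒫_j ≤ A·2^{j+1} for all j (volume bound), and (b) #𝒫_j ≤ B·δ^{−p}·2^{−jrp/d} for all j (estimator bound), where A, B, δ, r, p, d > 0, and 𝒫_j is empty for j < 0. Then #M ≤ C(A, r, p, d) · (B^{d/(d+rp)} A^{rp/(d+rp)}) · δ^{−dp/(d+rp)}, i.e. the total cardinality is bounded by a constant times δ^{−dp/(d+rp)}. -/
import Mathlib

open Finset Real

/-- **abstract greedy counting argument.**
If a finite set `M` is partitioned into classes `𝒫_j` with the volume bound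
`#𝒫_j ≤ A·2^{j+1}` and the estimator bound `#𝒫_j ≤ B δ^{−p} 2^{−jrp/d}`, then
`#M ≤ C(A,r,p,d) · B^{d/(d+rp)} A^{rp/(d+rp)} · δ^{−dp/(d+rp)}`. -/
theorem greedy_counting (A r p d : ℝ) (hA : 0 < A) (hr : 0 < r) (hp : 0 < p)
    (hd : 0 < d) :
    ∃ C : ℝ, 0 < C ∧
      ∀ (B δ : ℝ), 0 < B → 0 < δ →
      ∀ (α : Type) (M : Finset α) (P : ℕ → Finset α),
        (∀ i j, i ≠ j → Disjoint (P i) (P j)) →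
        (∀ j, P j ⊆ M) →
        (∀ x ∈ M, ∃ j, x ∈ P j) →
        (∀ j, ((P j).card : ℝ) ≤ A * 2 ^ (j + 1)) →
        (∀ j : ℕ, ((P j).card : ℝ) ≤ B * δ ^ (-p) * (2 : ℝ) ^ (-((j : ℝ) * r * p / d))) →
        (M.card : ℝ) ≤
          C * B ^ (d / (d + r * p)) * A ^ (r * p / (d + r * p))
            * δ ^ (-(d * p / (d + r * p))) := by
  classical
  have hdrp : 0 < d + r * p := by positivity
  set s : ℝ := d / (d + r * p) with hs_def
  set u : ℝ := r * p / (d + r * p) with hu_def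
  have hsu : s + u = 1 := by rw [hs_def, hu_def]; field_simp
  have hs0 : 0 < s := by rw [hs_def]; positivity
  have hu0 : 0 < u := by rw [hu_def]; positivity
  set q : ℝ := (2 : ℝ) ^ (-(r * p / d)) with hq_def
  have hq0 : 0 < q := rpow_pos_of_pos two_pos _
  have hq1 : q < 1 := by
    apply rpow_lt_one_of_one_lt_of_neg one_lt_two
    have : 0 < r * p / d := by positivity
    linarith
  have h1q : 0 < 1 - q := by linarith
  refine ⟨4 + 1 / (1 - q), by positivity, ?_⟩
  intro B δ hB hδ α M P hdisj hsub hcover hvol hest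
  set X : ℝ := B * δ ^ (-p) with hX_def
  have hX : 0 < X := by rw [hX_def]; positivity
  set t : ℝ := (X / A) ^ s with ht_def
  have ht0 : 0 < t := rpow_pos_of_pos (by positivity) _
  -- crossover index
  set j₀ : ℕ := if t ≤ 1 then 0 else ⌈Real.logb 2 t⌉₊ with hj₀_def
  have hlow : t ≤ (2 : ℝ) ^ j₀ := by
    by_cases h : t ≤ 1
    · simp only [hj₀_def, if_pos h, pow_zero]; exact h
    · rw [hj₀_def, if_neg h]
      have hlog : Real.logb 2 t ≤ (⌈Real.logb 2 t⌉₊ : ℝ) := Nat.le_ceil _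
      calc t = (2 : ℝ) ^ (Real.logb 2 t) := (Real.rpow_logb two_pos (by norm_num) ht0).symm
        _ ≤ (2 : ℝ) ^ ((⌈Real.logb 2 t⌉₊ : ℝ)) :=
            Real.rpow_le_rpow_of_exponent_le one_le_two hlog
        _ = (2 : ℝ) ^ (⌈Real.logb 2 t⌉₊ : ℕ) := Real.rpow_natCast 2 _
  -- cover: choose an index for each element of M
  have hfin : ∃ N : ℕ, ∀ x ∈ M, ∃ j < N, x ∈ P j := by
    have hchoice : ∀ x : α, ∃ j : ℕ, x ∈ M → x ∈ P j := by
      intro x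
      by_cases hx : x ∈ M
      · obtain ⟨j, hj⟩ := hcover x hx
        exact ⟨j, fun _ => hj⟩
      · exact ⟨0, fun h => absurd h hx⟩
    choose f hf using hchoice
    refine ⟨M.sup f + 1, fun x hx => ⟨f x, ?_, hf x hx⟩⟩
    exact Nat.lt_succ_of_le (Finset.le_sup hx)
  obtain ⟨N, hN⟩ := hfin
  set N' : ℕ := max N j₀ with hN'_def
  have hMsub : M ⊆ (Finset.range N').biUnion P := by
    intro x hx
    obtain ⟨j, hj, hxj⟩ := hN x hx
    exact Finset.mem_biUnion.2 ⟨j, Finset.mem_range.2 (lt_of_lt_of_le hj (le_max_left _ _)), hxj⟩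
  have hcard : (M.card : ℝ) ≤ ∑ j ∈ Finset.range N', ((P j).card : ℝ) := by
    have h1 : M.card ≤ ((Finset.range N').biUnion P).card := Finset.card_le_card hMsub
    have h2 : ((Finset.range N').biUnion P).card ≤ ∑ j ∈ Finset.range N', (P j).card :=
      Finset.card_biUnion_le
    exact_mod_cast le_trans h1 h2
  -- split the sum
  have hsplit : ∑ j ∈ Finset.range N', ((P j).card : ℝ)
      = ∑ j ∈ Finset.range j₀, ((P j).card : ℝ)
        + ∑ j ∈ Finset.Ico j₀ N', ((P j).card : ℝ) :=
    (Finset.sum_range_add_sum_Ico _ (le_max_right _ _)).symm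
  -- head bound
  have hhead : ∑ j ∈ Finset.range j₀, ((P j).card : ℝ) ≤ 4 * A * t := by
    by_cases h : t ≤ 1
    · rw [hj₀_def, if_pos h]
      simp only [Finset.range_zero, Finset.sum_empty]
      positivity
    · have hhi : (2 : ℝ) ^ j₀ ≤ 2 * t := by
        rw [hj₀_def, if_neg h]
        have hlog0 : 0 ≤ Real.logb 2 t :=
          Real.logb_nonneg one_lt_two (le_of_not_ge h)
        have hceil : (⌈Real.logb 2 t⌉₊ : ℝ) < Real.logb 2 t + 1 := Nat.ceil_lt_add_one hlog0
        calc (2 : ℝ) ^ (⌈Real.logb 2 t⌉₊ : ℕ) = (2 : ℝ) ^ ((⌈Real.logb 2 t⌉₊ : ℕ) : ℝ) :=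
              (Real.rpow_natCast 2 _).symm
          _ ≤ (2 : ℝ) ^ (Real.logb 2 t + 1) :=
              Real.rpow_le_rpow_of_exponent_le one_le_two hceil.le
          _ = (2 : ℝ) ^ (Real.logb 2 t) * 2 := by
              rw [Real.rpow_add two_pos, Real.rpow_one]
          _ = 2 * t := by rw [Real.rpow_logb two_pos (by norm_num) ht0]; ring
      calc ∑ j ∈ Finset.range j₀, ((P j).card : ℝ)
          ≤ ∑ j ∈ Finset.range j₀, A * 2 ^ (j + 1) :=
            Finset.sum_le_sum fun j _ => hvol j
        _ = A * 2 * ∑ j ∈ Finset.range j₀, (2 : ℝ) ^ j := by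
            rw [Finset.mul_sum]; exact Finset.sum_congr rfl fun j _ => by ring
        _ = A * 2 * ((2 ^ j₀ - 1) / (2 - 1)) := by rw [geom_sum_eq (by norm_num : (2:ℝ) ≠ 1)]
        _ ≤ A * 2 * 2 ^ j₀ := by
            have h2 : ((2:ℝ) ^ j₀ - 1) / (2 - 1) ≤ 2 ^ j₀ := by
              have : (0:ℝ) < 2 ^ j₀ := by positivity
              norm_num
            exact mul_le_mul_of_nonneg_left h2 (by positivity)
        _ ≤ A * 2 * (2 * t) := mul_le_mul_of_nonneg_left hhi (by positivity)
        _ = 4 * A * t := by ring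
  -- tail bound
  have hqpow : ∀ j : ℕ, (2 : ℝ) ^ (-((j : ℝ) * r * p / d)) = q ^ j := by
    intro j
    rw [hq_def, ← Real.rpow_natCast ((2:ℝ) ^ (-(r * p / d))) j,
      ← Real.rpow_mul (by norm_num : (0:ℝ) ≤ 2)]
    congr 1
    ring
  have hqj₀ : q ^ j₀ ≤ t ^ (-(r * p / d)) := by
    have h1 : (q : ℝ) ^ j₀ = ((2 : ℝ) ^ j₀) ^ (-(r * p / d)) := by
      rw [← Real.rpow_natCast (2:ℝ) j₀, ← Real.rpow_mul (by norm_num : (0:ℝ) ≤ 2),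
        hq_def, ← Real.rpow_natCast ((2:ℝ) ^ (-(r * p / d))) j₀,
        ← Real.rpow_mul (by norm_num : (0:ℝ) ≤ 2)]
      congr 1
      ring
    rw [h1]
    exact Real.rpow_le_rpow_of_nonpos ht0 hlow (neg_nonpos.2 (by positivity))
  have htail : ∑ j ∈ Finset.Ico j₀ N', ((P j).card : ℝ)
      ≤ X * t ^ (-(r * p / d)) / (1 - q) := by
    calc ∑ j ∈ Finset.Ico j₀ N', ((P j).card : ℝ)
        ≤ ∑ j ∈ Finset.Ico j₀ N', X * q ^ j := by
          refine Finset.sum_le_sum fun j _ => ?_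
          have hej := hest j
          rw [hqpow j] at hej
          exact hej
      _ = X * ∑ j ∈ Finset.Ico j₀ N', q ^ j := by rw [Finset.mul_sum]
      _ ≤ X * (q ^ j₀ / (1 - q)) :=
          mul_le_mul_of_nonneg_left (geom_sum_Ico_le_of_lt_one hq0.le hq1) hX.le
      _ ≤ X * (t ^ (-(r * p / d)) / (1 - q)) := by
          apply mul_le_mul_of_nonneg_left _ hX.le
          gcongr
      _ = X * t ^ (-(r * p / d)) / (1 - q) := by ring
  -- key algebraic identities
  have hXA : (0:ℝ) < X / A := by positivity
  have hA1 : A * (A ^ s)⁻¹ = A ^ u := by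
    rw [← Real.rpow_neg hA.le]
    nth_rewrite 1 [← Real.rpow_one A]
    rw [← Real.rpow_add hA, show (1:ℝ) + -s = u by linarith]
  have hid1 : A * t = X ^ s * A ^ u := by
    rw [ht_def, Real.div_rpow hX.le hA.le]
    calc A * (X ^ s / A ^ s) = X ^ s * (A * (A ^ s)⁻¹) := by ring
      _ = X ^ s * A ^ u := by rw [hA1]
  have hX1 : X * (X ^ u)⁻¹ = X ^ s := by
    rw [← Real.rpow_neg hX.le]
    nth_rewrite 1 [← Real.rpow_one X]
    rw [← Real.rpow_add hX, show (1:ℝ) + -u = s by linarith]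
  have hid2 : X * t ^ (-(r * p / d)) = X ^ s * A ^ u := by
    have hsu' : s * (r * p / d) = u := by
      rw [hs_def, hu_def]
      field_simp
    have h1 : t ^ (-(r * p / d)) = (X / A) ^ (-u) := by
      rw [ht_def, ← Real.rpow_mul hXA.le]
      congr 1
      rw [← hsu']; ring
    rw [h1, Real.rpow_neg hXA.le, Real.div_rpow hX.le hA.le, inv_div]
    calc X * (A ^ u / X ^ u) = (X * (X ^ u)⁻¹) * A ^ u := by ring
      _ = X ^ s * A ^ u := by rw [hX1]
  have hE : X ^ s = B ^ s * δ ^ (-(d * p / (d + r * p))) := by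
    rw [hX_def, Real.mul_rpow hB.le (by positivity), ← Real.rpow_mul hδ.le]
    congr 1
    rw [hs_def]
    ring
  -- final assembly
  have hfinal : (M.card : ℝ) ≤ (4 + 1 / (1 - q)) * (X ^ s * A ^ u) := by
    calc (M.card : ℝ) ≤ ∑ j ∈ Finset.range N', ((P j).card : ℝ) := hcard
      _ = ∑ j ∈ Finset.range j₀, ((P j).card : ℝ)
          + ∑ j ∈ Finset.Ico j₀ N', ((P j).card : ℝ) := hsplit
      _ ≤ 4 * A * t + X * t ^ (-(r * p / d)) / (1 - q) := add_le_add hhead htail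
      _ = 4 * (A * t) + (1 / (1 - q)) * (X * t ^ (-(r * p / d))) := by ring
      _ = (4 + 1 / (1 - q)) * (X ^ s * A ^ u) := by rw [hid1, hid2]; ring
  calc (M.card : ℝ) ≤ (4 + 1 / (1 - q)) * (X ^ s * A ^ u) := hfinal
    _ = (4 + 1 / (1 - q)) * B ^ s * A ^ u * δ ^ (-(d * p / (d + r * p))) := by
        rw [hE]; ring
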